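/- arXiv:2503.06650 — 2 statements merged into one kernel-verified Lean document; each statement's English description precedes it below -/
import Mathlib

section
/- Let n ≥ 2, let λ_1, …, λ_n be real numbers, let U be an n × n real orthogonal matrix, and set M = Uᵀ · Diag(λ_1, …, λ_n) · U. Then the characteristic polynomial of the top-left (n−1) × (n−1) submatrix of M equals Σ_{k=1}^n (U_{k,n})² · ∏_{1 ≤ j ≤ n, j ≠ k} (z − λ_j) as polynomials in z. -/
open Polynomial Finset Matrix

/-! The minor's characteristic polynomial is the `(n, n)` cofactor of `z • 1 - M`, i.e. an entry of
`adjugate (charmatrix M)`. Since `charmatrix (Uᵀ Λ U) = Uᵀ (z • 1 - Λ) U` with `Uᵀ U = 1`, and the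
adjugate commutes with such a conjugation, that entry is `Σ_k U_{k,n}² ∏_{j ≠ k} (z - λ_j)`, the
adjugate of the diagonal matrix `z • 1 - Λ` being diagonal with entries `∏_{j ≠ k} (z - λ_j)`. -/

namespace Matrix

variable {R : Type*} [CommRing R] {m n : Type*} [Fintype m] [DecidableEq m] [Fintype n]
  [DecidableEq n]

theorem charmatrix_submatrix {f : m → n} (hf : Function.Injective f) (M : Matrix n n R) :
    charmatrix (M.submatrix f f) = (charmatrix M).submatrix f f := by
  ext i j
  obtain rfl | hij := eq_or_ne i j
  · simp
  · simp [charmatrix_apply_ne _ _ _ hij, charmatrix_apply_ne _ _ _ (hf.ne hij)]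

theorem charpoly_submatrix_castSucc {k : ℕ} (M : Matrix (Fin (k + 1)) (Fin (k + 1)) R) :
    (M.submatrix Fin.castSucc Fin.castSucc).charpoly =
      adjugate (charmatrix M) (Fin.last k) (Fin.last k) := by
  rw [adjugate_fin_succ_eq_det_submatrix, Fin.succAbove_last, ← two_mul, pow_mul, neg_one_sq,
    one_pow, one_mul, charpoly, charmatrix_submatrix (Fin.castSucc_injective k)]

theorem charmatrix_mul_mul_of_mul_eq_one {P Q : Matrix n n R} (hPQ : P * Q = 1)
    (A : Matrix n n R) :
    charmatrix (P * A * Q) = P.map C * charmatrix A * Q.map C := by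
  have hPQ' : P.map C * Q.map C = 1 := by
    rw [← Matrix.map_mul, hPQ, Matrix.map_one _ (map_zero C) (map_one C)]
  simp only [charmatrix, RingHom.mapMatrix_apply, Matrix.map_mul, Matrix.mul_sub, Matrix.sub_mul,
    scalar_apply, ← smul_one_eq_diagonal, Matrix.mul_smul, Matrix.smul_mul, Matrix.mul_one, hPQ']

theorem adjugate_eq_det_smul_of_mul_eq_one {P Q : Matrix n n R} (hPQ : P * Q = 1) :
    adjugate P = P.det • Q := by
  rw [← Matrix.mul_one (adjugate P), ← hPQ, ← Matrix.mul_assoc, adjugate_mul, Matrix.smul_mul,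
    Matrix.one_mul]

theorem adjugate_mul_mul_of_mul_eq_one {P Q : Matrix n n R} (hPQ : P * Q = 1)
    (A : Matrix n n R) :
    adjugate (P * A * Q) = P * adjugate A * Q := by
  have hQP : Q * P = 1 := mul_eq_one_comm.mp hPQ
  rw [adjugate_mul_distrib, adjugate_mul_distrib, adjugate_eq_det_smul_of_mul_eq_one hPQ,
    adjugate_eq_det_smul_of_mul_eq_one hQP]
  simp only [Matrix.smul_mul, Matrix.mul_smul, smul_smul, ← det_mul, hPQ, det_one, one_smul,
    Matrix.mul_assoc]

end Matrix

/-- Let `n ≥ 2` (here the dimension is `n + 2`), let `λ_1, …, λ_n` be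
real numbers, let `U` be an `n × n` real orthogonal matrix and set
`M = Uᵀ · Diag(λ_1, …, λ_n) · U`.  Then the characteristic polynomial of the top-left
`(n-1) × (n-1)` submatrix of `M` equals
`Σ_{k=1}^n (U_{k,n})² · ∏_{j ≠ k} (z - λ_j)` as polynomials in `z`. -/
theorem charpoly_minor_orthogonal_conjugate
    (n : ℕ) (lam : Fin (n + 2) → ℝ)
    (U : Matrix (Fin (n + 2)) (Fin (n + 2)) ℝ)
    (hU : U ∈ Matrix.orthogonalGroup (Fin (n + 2)) ℝ) :
    ((Uᵀ * Matrix.diagonal lam * U).submatrix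
        (Fin.castSucc : Fin (n + 1) → Fin (n + 2))
        (Fin.castSucc : Fin (n + 1) → Fin (n + 2))).charpoly
      = ∑ k : Fin (n + 2),
          C ((U k (Fin.last (n + 1))) ^ 2) *
            ∏ j ∈ Finset.univ.erase k, (X - C (lam j)) := by
  have hUtU : Uᵀ * U = 1 := by
    simpa [star_eq_conjTranspose] using (mem_orthogonalGroup_iff' _ _).mp hU
  have hUtU' : Uᵀ.map C * U.map C = (1 : Matrix _ _ ℝ[X]) := by
    rw [← Matrix.map_mul, hUtU, Matrix.map_one _ (map_zero C) (map_one C)]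
  rw [charpoly_submatrix_castSucc, charmatrix_mul_mul_of_mul_eq_one hUtU, charmatrix_diagonal,
    adjugate_mul_mul_of_mul_eq_one hUtU', adjugate_diagonal, mul_apply]
  simp only [mul_diagonal, transpose_apply, map_apply, map_pow]
  exact Finset.sum_congr rfl fun k _ => by ring
end

section
/- Let β > 0, A > 0 and δ > 0. There is a constant C depending only on β, A and δ such that the following holds for every integer N ≥ 2 and every 1 ≤ d ≤ N − 1. Let λ_1, …, λ_N ∈ [−A, A], let z > A + 1, let γ_1, …, γ_N be i.i.d. random variables with the Gamma(β/2, 1) distribution, and set ρ_j = γ_j / Σ_{ℓ=1}^N γ_ℓ (a Dirichlet vector with all parameters β/2). Then P( N · (Σ_{j=1}^N ρ_j Y_j) / (Σ_{j=1}^N Y_j) ∉ (e^{−δ}, e^{δ}) ) ≤ C · N^{−3}. -/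
/-!
With `c_j = N Y_j / Σ_k Y_k` the ratio is `(Σ_j c_j γ_j) / (Σ_j γ_j)`. All factors
`z - λ_i` lie in `[z - A, z + A]` and `z - A ≥ 1`, so the `Y_j` agree up to a factor
`2A + 1`, whence `0 ≤ c_j ≤ 2A + 1` and `Σ_j c_j = N`. Numerator and denominator are thus
weighted sums of independent `Gamma(a, 1)` variables, `a = β/2`, with mean `aN`; their moment
generating function `∏_j (1 - c_j t)^(-a)` is at most `exp (aN (t + 2(2A + 1) t²))` for
`|t| ≤ 1/(2(2A + 1))`. The Chernoff bound puts each of them in `aN (1 ± η)`, where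
`(1 + η)/(1 - η) = e^δ`, outside an event of probability `2 e^{-κN}` with
`κ = a η² / (8(2A + 1))`, and `e^{-κN} ≤ 3!/(κN)³`.
-/

open MeasureTheory ProbabilityTheory Finset

/-- For an index `j` of `{1,…,N}`, `Y_j` is the sum over all injective `d`-tuples
`(j_1, …, j_d)` of pairwise distinct indices in `{1,…,N} \ {j}` of
`∏_{ℓ=1}^d (z - λ_{j_ℓ})`. -/
noncomputable def Yquant (N d : ℕ) (lam : Fin N → ℝ) (z : ℝ) (j : Fin N) : ℝ :=
  ∑ f ∈ Finset.univ.filter (fun f : Fin d ↪ Fin N => ∀ l, f l ≠ j),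
    ∏ l : Fin d, (z - lam (f l))

open Real

lemma exp_mul_mul_gammaPDFReal {a r t : ℝ} (hr : 0 < r) (ht : t < r) (x : ℝ) :
    exp (t * x) * gammaPDFReal a r x = (1 - t / r) ^ (-a) * gammaPDFReal a (r - t) x := by
  have hrt : 0 < 1 - t / r := by rw [sub_pos, div_lt_one hr]; exact ht
  have hscale : (1 - t / r) ^ (-a) * (r - t) ^ a = r ^ a := by
    rw [show r - t = r * (1 - t / r) by field_simp, mul_rpow hr.le hrt.le, rpow_neg hrt.le,
      mul_comm (r ^ a), inv_mul_cancel_left₀ (rpow_pos_of_pos hrt a).ne']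
  unfold gammaPDFReal
  split_ifs
  · rw [← hscale, show -((r - t) * x) = t * x + -(r * x) by ring, exp_add]
    ring
  · simp

lemma mgf_id_gammaMeasure {a r t : ℝ} (ha : 0 < a) (hr : 0 < r) (ht : t < r) :
    mgf id (gammaMeasure a r) t = (1 - t / r) ^ (-a) := by
  have hrt : 0 < 1 - t / r := by rw [sub_pos, div_lt_one hr]; exact ht
  have hexp : Measurable fun x : ℝ => ENNReal.ofReal (exp (t * id x)) := by fun_prop
  have hdens : Measurable (gammaPDF a r) := (measurable_gammaPDFReal a r).ennreal_ofReal
  rw [mgf, integral_eq_lintegral_of_nonneg_ae (ae_of_all _ fun x => (exp_pos _).le)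
    (by fun_prop), gammaMeasure,
    lintegral_withDensity_eq_lintegral_mul _ hdens hexp]
  have hdensity : ∀ x, (gammaPDF a r * fun x => ENNReal.ofReal (exp (t * id x))) x
      = ENNReal.ofReal ((1 - t / r) ^ (-a)) * gammaPDF a (r - t) x := by
    intro x
    rw [Pi.mul_apply, gammaPDF, gammaPDF, id, mul_comm,
      ← ENNReal.ofReal_mul (exp_pos _).le, ← ENNReal.ofReal_mul (by positivity),
      exp_mul_mul_gammaPDFReal hr ht]
  have hdens' : Measurable (gammaPDF a (r - t)) :=
    (measurable_gammaPDFReal a (r - t)).ennreal_ofReal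
  rw [lintegral_congr hdensity, lintegral_const_mul _ hdens',
    lintegral_gammaPDF_eq_one ha (sub_pos.mpr ht), mul_one, ENNReal.toReal_ofReal (by positivity)]

lemma rpow_neg_one_sub_le_exp {a u : ℝ} (ha : 0 < a) (hu : u ≤ 1 / 2) :
    (1 - u) ^ (-a) ≤ exp (a * (u + 2 * u ^ 2)) := by
  have hpos : 0 < 1 - u := by linarith
  rw [rpow_def_of_pos hpos, exp_le_exp]
  -- `log y ≥ 1 - 1/y`, and `u / (1 - u) ≤ u + 2 u²` is `0 ≤ u² (1 - 2u)`
  have hlog : -(u / (1 - u)) ≤ log (1 - u) := by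
    have := one_sub_inv_le_log_of_pos hpos
    rwa [show 1 - (1 - u)⁻¹ = -(u / (1 - u)) by field_simp; ring] at this
  have hfrac : u / (1 - u) ≤ u + 2 * u ^ 2 := by
    rw [div_le_iff₀ hpos]; nlinarith [sq_nonneg u]
  nlinarith

lemma exp_neg_le_factorial_div_pow {x : ℝ} (hx : 0 < x) (n : ℕ) :
    exp (-x) ≤ n.factorial / x ^ n := by
  rw [exp_neg, ← inv_div]
  exact inv_anti₀ (by positivity) (pow_div_factorial_le_exp (x := x) hx.le n)

lemma div_mem_Ioo_of_mem_Ioo {U V m η E : ℝ} (hm : 0 < m) (hη : η < 1)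
    (hE : 1 + η ≤ E * (1 - η)) (hU : U ∈ Set.Ioo (m * (1 - η)) (m * (1 + η)))
    (hV : V ∈ Set.Ioo (m * (1 - η)) (m * (1 + η))) :
    U / V ∈ Set.Ioo E⁻¹ E := by
  obtain ⟨hU₁, hU₂⟩ := hU
  obtain ⟨hV₁, hV₂⟩ := hV
  have hlow : 0 < m * (1 - η) := mul_pos hm (by linarith)
  have hupper : m * (1 + η) ≤ E * (m * (1 - η)) := by nlinarith
  have hE0 : 0 < E := pos_of_mul_pos_left (by linarith) hlow.le
  have hV0 : 0 < V := hlow.trans hV₁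
  constructor
  · rw [lt_div_iff₀ hV0, inv_mul_lt_iff₀ hE0]; nlinarith
  · rw [div_lt_iff₀ hV0]; nlinarith

section Chernoff

variable {Ω : Type*} {mΩ : MeasurableSpace Ω} {P : Measure Ω} [IsProbabilityMeasure P]
  {X : Ω → ℝ} {m v ε : ℝ}

lemma measureReal_ge_le_of_mgf_le (hv : 0 < v) (hε : 0 ≤ ε)
    (hint : Integrable (fun ω => exp (ε / (2 * v) * X ω)) P)
    (hmgf : mgf X P (ε / (2 * v)) ≤ exp (m * (ε / (2 * v)) + v * (ε / (2 * v)) ^ 2)) :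
    P.real {ω | m + ε ≤ X ω} ≤ exp (-(ε ^ 2 / (4 * v))) := by
  calc P.real {ω | m + ε ≤ X ω}
      ≤ exp (-(ε / (2 * v)) * (m + ε)) * mgf X P (ε / (2 * v)) :=
        measure_ge_le_exp_mul_mgf _ (by positivity) hint
    _ ≤ exp (-(ε / (2 * v)) * (m + ε)) * exp (m * (ε / (2 * v)) + v * (ε / (2 * v)) ^ 2) := by
        gcongr
    _ = exp (-(ε ^ 2 / (4 * v))) := by
        rw [← exp_add]; congr 1; field_simp; ring

lemma measureReal_notMem_Ioo_le_of_mgf_le {τ : ℝ} (hv : 0 < v) (hε : 0 ≤ ε)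
    (hετ : ε / (2 * v) ≤ τ)
    (hX : ∀ t, |t| ≤ τ →
      Integrable (fun ω => exp (t * X ω)) P ∧ mgf X P t ≤ exp (m * t + v * t ^ 2)) :
    P.real {ω | X ω ∉ Set.Ioo (m - ε) (m + ε)} ≤ 2 * exp (-(ε ^ 2 / (4 * v))) := by
  set s := ε / (2 * v)
  have hs : |s| ≤ τ := by rwa [abs_of_nonneg (by positivity)]
  obtain ⟨hint_pos, hmgf_pos⟩ := hX s hs
  obtain ⟨hint_neg, hmgf_neg⟩ := hX (-s) (by rwa [abs_neg])
  have upper := measureReal_ge_le_of_mgf_le hv hε hint_pos hmgf_pos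
  -- the lower tail of `X` is the upper tail of `-X`
  have lower : P.real {ω | -m + ε ≤ (-X) ω} ≤ exp (-(ε ^ 2 / (4 * v))) := by
    refine measureReal_ge_le_of_mgf_le hv hε ?_ ?_
    · simpa only [Pi.neg_apply, mul_neg, neg_mul] using hint_neg
    · rw [mgf_neg]; convert hmgf_neg using 2; ring
  have hsub : {ω | X ω ∉ Set.Ioo (m - ε) (m + ε)} ⊆
      {ω | m + ε ≤ X ω} ∪ {ω | -m + ε ≤ (-X) ω} := by
    intro ω hω
    rcases le_or_gt (X ω) (m - ε) with h | h
    · right; simp only [Set.mem_ofPred_eq, Pi.neg_apply]; linarith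
    · left; exact not_lt.mp fun h' => hω ⟨h, h'⟩
  calc P.real {ω | X ω ∉ Set.Ioo (m - ε) (m + ε)}
      ≤ P.real {ω | m + ε ≤ X ω} + P.real {ω | -m + ε ≤ (-X) ω} :=
        (measureReal_mono hsub).trans (measureReal_union_le _ _)
    _ ≤ 2 * exp (-(ε ^ 2 / (4 * v))) := by linarith

end Chernoff

section GammaSums

variable {ι Ω : Type*} [Fintype ι] {mΩ : MeasurableSpace Ω} {P : Measure Ω}
  {γ : ι → Ω → ℝ} {a b S : ℝ} {c : ι → ℝ}

lemma mgf_sum_mul_of_gammaMeasure (ha : 0 < a) (hmeas : ∀ j, Measurable (γ j))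
    (hindep : iIndepFun γ P) (hlaw : ∀ j, P.map (γ j) = gammaMeasure a 1) {t : ℝ}
    (hct : ∀ j, c j * t < 1) :
    mgf (fun ω => ∑ j, c j * γ j ω) P t = ∏ j, (1 - c j * t) ^ (-a) := by
  have hsum : (fun ω => ∑ j, c j * γ j ω) = ∑ j, fun ω => c j * γ j ω := by
    ext ω; simp
  have hindep' : iIndepFun (fun j ω => c j * γ j ω) P :=
    hindep.comp (fun j x => c j * x) fun j => measurable_const_mul _
  rw [hsum, hindep'.mgf_sum fun j => (hmeas j).const_mul _]
  refine prod_congr rfl fun j _ => ?_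
  rw [mgf_const_mul, ← mgf_id_map (hmeas j).aemeasurable, hlaw,
    mgf_id_gammaMeasure ha one_pos (hct j), div_one]

lemma mgf_sum_mul_of_gammaMeasure_le [IsProbabilityMeasure P] (ha : 0 < a)
    (hmeas : ∀ j, Measurable (γ j)) (hindep : iIndepFun γ P)
    (hlaw : ∀ j, P.map (γ j) = gammaMeasure a 1)
    (hc : ∀ j, c j ∈ Set.Icc 0 b) (hS : ∑ j, c j = S) {t : ℝ} (ht : |t| * b ≤ 1 / 2) :
    Integrable (fun ω => exp (t * ∑ j, c j * γ j ω)) P ∧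
      mgf (fun ω => ∑ j, c j * γ j ω) P t ≤ exp (a * S * t + 2 * a * b * S * t ^ 2) := by
  have hct : ∀ j, c j * t ≤ 1 / 2 := fun j =>
    calc c j * t ≤ c j * |t| := mul_le_mul_of_nonneg_left (le_abs_self t) (hc j).1
      _ ≤ b * |t| := mul_le_mul_of_nonneg_right (hc j).2 (abs_nonneg t)
      _ ≤ 1 / 2 := by linarith
  have hmgf := mgf_sum_mul_of_gammaMeasure ha hmeas hindep hlaw fun j =>
    (hct j).trans_lt (by norm_num)
  refine ⟨mgf_pos_iff.mp ?_, ?_⟩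
  · rw [hmgf]
    exact prod_pos fun j _ => rpow_pos_of_pos (by linarith [hct j]) _
  -- `(c t)² ≤ b c t²` since `0 ≤ c ≤ b`
  have hfactor : ∀ j, (1 - c j * t) ^ (-a) ≤ exp (a * c j * (t + 2 * b * t ^ 2)) := fun j =>
    (rpow_neg_one_sub_le_exp ha (hct j)).trans <| exp_le_exp.mpr <| by
      have := mul_le_mul_of_nonneg_left (mul_le_mul_of_nonneg_right (hc j).2 (hc j).1)
        (by positivity : (0 : ℝ) ≤ 2 * a * t ^ 2)
      linarith
  calc mgf (fun ω => ∑ j, c j * γ j ω) P t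
      ≤ ∏ j, exp (a * c j * (t + 2 * b * t ^ 2)) := by
        rw [hmgf]
        exact prod_le_prod (fun j _ => (rpow_pos_of_pos (by linarith [hct j]) _).le)
          fun j _ => hfactor j
    _ = exp (a * S * t + 2 * a * b * S * t ^ 2) := by
        rw [← exp_sum, ← hS, ← sum_mul, ← mul_sum]; ring_nf

lemma measureReal_sum_mul_of_gammaMeasure_notMem_Ioo_le [IsProbabilityMeasure P]
    (ha : 0 < a) (hb : 0 < b) (hmeas : ∀ j, Measurable (γ j)) (hindep : iIndepFun γ P)
    (hlaw : ∀ j, P.map (γ j) = gammaMeasure a 1)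
    (hc : ∀ j, c j ∈ Set.Icc 0 b) (hS : ∑ j, c j = S) (hS0 : 0 < S) {η : ℝ}
    (hη0 : 0 ≤ η) (hη2 : η ≤ 2) :
    P.real {ω | ∑ j, c j * γ j ω ∉ Set.Ioo (a * S * (1 - η)) (a * S * (1 + η))}
      ≤ 2 * exp (-(a * η ^ 2 / (8 * b) * S)) := by
  have hv : 0 < 2 * a * b * S := by positivity
  have key := measureReal_notMem_Ioo_le_of_mgf_le (P := P) (m := a * S) (ε := a * S * η)
    (τ := 1 / (2 * b)) hv (by positivity)
    (by rw [div_le_div_iff₀ (by positivity) (by positivity)]; nlinarith [mul_pos ha hS0])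
    fun t ht => mgf_sum_mul_of_gammaMeasure_le ha hmeas hindep hlaw hc hS
      (by rw [le_div_iff₀ (by positivity)] at ht; linarith)
  rwa [mul_one_sub, mul_one_add,
    show a * η ^ 2 / (8 * b) * S = (a * S * η) ^ 2 / (4 * (2 * a * b * S)) by field_simp; ring]

lemma measureReal_sum_mul_div_sum_notMem_Ioo_le [Nonempty ι] [IsProbabilityMeasure P]
    (ha : 0 < a) (hb : 1 ≤ b) (hmeas : ∀ j, Measurable (γ j)) (hindep : iIndepFun γ P)
    (hlaw : ∀ j, P.map (γ j) = gammaMeasure a 1)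
    (hc : ∀ j, c j ∈ Set.Icc 0 b) (hcsum : ∑ j, c j = Fintype.card ι) {E : ℝ}
    (hE : 1 < E) :
    P.real {ω | (∑ j, c j * γ j ω) / ∑ j, γ j ω ∉ Set.Ioo E⁻¹ E}
      ≤ 4 * exp (-(a * ((E - 1) / (E + 1)) ^ 2 / (8 * b) * Fintype.card ι)) := by
  set η := (E - 1) / (E + 1)
  have hη0 : 0 < η := div_pos (by linarith) (by linarith)
  have hη1 : η < 1 := (div_lt_one (by linarith)).mpr (by linarith)
  have hηE : 1 + η = E * (1 - η) := by
    simp only [η]; field_simp; ring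
  have hn : (0 : ℝ) < Fintype.card ι := Nat.cast_pos.mpr Fintype.card_pos
  have hU := measureReal_sum_mul_of_gammaMeasure_notMem_Ioo_le ha (by linarith) hmeas hindep
    hlaw hc hcsum hn hη0.le (by linarith)
  have hV := measureReal_sum_mul_of_gammaMeasure_notMem_Ioo_le ha (by linarith) hmeas hindep
    hlaw (c := 1) (fun _ => ⟨zero_le_one, hb⟩) (by simp) hn hη0.le (by linarith)
  simp only [Pi.one_apply, one_mul] at hV
  set I := Set.Ioo (a * Fintype.card ι * (1 - η)) (a * Fintype.card ι * (1 + η))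
  have hsub : {ω | (∑ j, c j * γ j ω) / ∑ j, γ j ω ∉ Set.Ioo E⁻¹ E} ⊆
      {ω | ∑ j, c j * γ j ω ∉ I} ∪ {ω | ∑ j, γ j ω ∉ I} := by
    intro ω hω
    by_contra hgood
    simp only [Set.mem_union, Set.mem_ofPred_eq, not_or, not_not] at hgood
    exact hω (div_mem_Ioo_of_mem_Ioo (by positivity) hη1 hηE.le hgood.1 hgood.2)
  calc _ ≤ _ := (measureReal_mono hsub).trans (measureReal_union_le _ _)
    _ ≤ _ := by linarith

end GammaSums

lemma prod_le_mul_prod_swap {ι : Type*} [DecidableEq ι] {d : ℕ} {w : ι → ℝ} {K : ℝ}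
    (hw : ∀ i, 0 < w i) (hK : ∀ i i', w i ≤ K * w i') {j k : ι} {f : Fin d ↪ ι}
    (hf : ∀ l, f l ≠ j) :
    ∏ l, w (f l) ≤ K * ∏ l, w (Equiv.swap j k (f l)) := by
  by_cases hk : ∃ l₀, f l₀ = k
  · -- swapping replaces the factor `w k` by `w j` and fixes the others
    obtain ⟨l₀, rfl⟩ := hk
    have hfix : ∀ l ∈ univ.erase l₀, w (Equiv.swap j (f l₀) (f l)) = w (f l) := fun l hl =>
      by rw [Equiv.swap_apply_of_ne_of_ne (hf l) (f.injective.ne (mem_erase.mp hl).1)]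
    rw [← mul_prod_erase _ _ (mem_univ l₀),
      ← mul_prod_erase _ (fun l => w (Equiv.swap j (f l₀) (f l))) (mem_univ l₀),
      prod_congr rfl hfix, Equiv.swap_apply_right, ← mul_assoc]
    exact mul_le_mul_of_nonneg_right (hK _ _) (prod_pos fun l _ => hw _).le
  · have hfix : ∀ l, w (Equiv.swap j k (f l)) = w (f l) := fun l => by
      rw [Equiv.swap_apply_of_ne_of_ne (hf l) fun h => hk ⟨l, h⟩]
    have hK1 : 1 ≤ K := le_of_mul_le_mul_right (by simpa using hK j j) (hw j)
    simp only [hfix]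
    exact le_mul_of_one_le_left (prod_pos fun l _ => hw _).le hK1

lemma Yquant_pos {N d : ℕ} {lam : Fin N → ℝ} {z : ℝ} (hd : d < N)
    (hpos : ∀ i, 0 < z - lam i) (j : Fin N) : 0 < Yquant N d lam z j := by
  obtain ⟨n, rfl⟩ : ∃ n, N = n + 1 := ⟨N - 1, by omega⟩
  refine sum_pos (fun f _ => prod_pos fun l _ => hpos _)
    ⟨(Fin.castLEEmb (by omega)).trans j.succAboveEmb, ?_⟩
  simp [Fin.succAbove_ne]

lemma Yquant_le_mul_Yquant {N d : ℕ} {lam : Fin N → ℝ} {z K : ℝ}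
    (hpos : ∀ i, 0 < z - lam i) (hK : ∀ i i', z - lam i ≤ K * (z - lam i')) (j k : Fin N) :
    Yquant N d lam z j ≤ K * Yquant N d lam z k := by
  let σ : Fin N ↪ Fin N := (Equiv.swap j k).toEmbedding
  unfold Yquant
  rw [mul_sum]
  refine (sum_le_sum fun f hf =>
    prod_le_mul_prod_swap (k := k) hpos hK (mem_filter.mp hf).2).trans_eq ?_
  -- composing with the transposition `(j k)` matches tuples avoiding `j` with those avoiding `k`
  refine sum_nbij' (fun f => f.trans σ) (fun g => g.trans σ) ?_ ?_ ?_ ?_ fun f _ => rfl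
  · simp only [mem_filter, mem_univ, true_and]
    intro f hf l h
    exact hf l (σ.injective (h.trans (Equiv.swap_apply_left j k).symm))
  · simp only [mem_filter, mem_univ, true_and]
    intro g hg l h
    exact hg l (σ.injective (h.trans (Equiv.swap_apply_right j k).symm))
  · intro f _; ext l; simp [σ]
  · intro g _; ext l; simp [σ]

lemma sub_le_two_mul_add_one_mul_sub {A x y z : ℝ} (hx : x ∈ Set.Icc (-A) A)
    (hy : y ∈ Set.Icc (-A) A) (hz : A + 1 ≤ z) : z - x ≤ (2 * A + 1) * (z - y) := by
  obtain ⟨hx₁, -⟩ := hx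
  obtain ⟨hy₁, hy₂⟩ := hy
  nlinarith [mul_nonneg (by linarith : 0 ≤ A) (by linarith : 0 ≤ z - A - 1)]

lemma card_mul_div_sum_mem_Icc {ι : Type*} [Fintype ι] [Nonempty ι] {Y : ι → ℝ} {b : ℝ}
    (hY : ∀ j, 0 < Y j) (hYb : ∀ j k, Y j ≤ b * Y k) (j : ι) :
    Fintype.card ι * Y j / ∑ k, Y k ∈ Set.Icc 0 b := by
  have hT : 0 < ∑ k, Y k := sum_pos (fun k _ => hY k) univ_nonempty
  refine ⟨div_nonneg (mul_nonneg (Nat.cast_nonneg _) (hY j).le) hT.le, ?_⟩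
  rw [div_le_iff₀ hT, mul_sum, ← nsmul_eq_mul, ← card_univ, ← sum_const]
  exact sum_le_sum fun k _ => hYb j k

lemma mul_sum_div_sum_mul_div_sum {ι : Type*} [Fintype ι] (n : ℝ) (x y : ι → ℝ) :
    n * (∑ j, (x j / ∑ l, x l) * y j) / ∑ j, y j
      = (∑ j, (n * y j / ∑ l, y l) * x j) / ∑ j, x j := by
  simp only [div_eq_mul_inv, mul_sum, sum_mul]
  exact sum_congr rfl fun j _ => by ring

lemma sum_mul_div_sum {ι : Type*} [Fintype ι] {Y : ι → ℝ} (hY : ∑ k, Y k ≠ 0) (n : ℝ) :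
    ∑ j, n * Y j / ∑ k, Y k = n := by
  rw [← sum_div, ← mul_sum, mul_div_cancel_right₀ _ hY]

theorem dirichlet_weighted_Y_ratio_concentration_general
    (β A δ : ℝ) (hβ : 0 < β) (hδ : 0 < δ) :
    ∃ C : ℝ,
      ∀ (N d : ℕ), 2 ≤ N → 1 ≤ d → d ≤ N - 1 →
      ∀ (lam : Fin N → ℝ), (∀ j, lam j ∈ Set.Icc (-A) A) →
      ∀ (z : ℝ), A + 1 < z →
      ∀ (Ω : Type) (_ : MeasurableSpace Ω) (P : Measure Ω), IsProbabilityMeasure P →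
      ∀ (γ : Fin N → Ω → ℝ),
        (∀ j, Measurable (γ j)) →
        iIndepFun γ P →
        (∀ j, Measure.map (γ j) P = gammaMeasure (β / 2) 1) →
        (P {ω | (N : ℝ) * (∑ j, (γ j ω / ∑ l, γ l ω) * Yquant N d lam z j) /
              (∑ j, Yquant N d lam z j) ∉
            Set.Ioo (Real.exp (-δ)) (Real.exp δ)}).toReal
          ≤ C * ((N : ℝ) ^ 3)⁻¹ := by
  set κ := β / 2 * ((exp δ - 1) / (exp δ + 1)) ^ 2 / (8 * (2 * A + 1))
  refine ⟨4 * Nat.factorial 3 / κ ^ 3, ?_⟩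
  intro N d hN _ hd lam hlam z hz Ω _ P _ γ hmeas hindep hlaw
  have : Nonempty (Fin N) := ⟨⟨0, by omega⟩⟩
  have hA : 0 ≤ A := by obtain ⟨h₁, h₂⟩ := hlam ⟨0, by omega⟩; linarith
  have hκ : 0 < κ := by have := one_lt_exp_iff.mpr hδ; positivity
  have hpos : ∀ i, 0 < z - lam i := fun i => by linarith [(hlam i).2]
  have hY : ∀ j, 0 < Yquant N d lam z j := Yquant_pos (by omega) hpos
  have hYb := Yquant_le_mul_Yquant (d := d) hpos fun i i' =>
    sub_le_two_mul_add_one_mul_sub (hlam i) (hlam i') hz.le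
  have hbound := measureReal_sum_mul_div_sum_notMem_Ioo_le (by positivity) (by linarith) hmeas
    hindep hlaw (card_mul_div_sum_mem_Icc hY hYb)
    (sum_mul_div_sum (sum_pos (fun k _ => hY k) univ_nonempty).ne' _) (one_lt_exp_iff.mpr hδ)
  rw [Fintype.card_fin] at hbound
  rw [← measureReal_def, exp_neg]
  simp only [mul_sum_div_sum_mul_div_sum]
  calc _ ≤ 4 * exp (-(κ * N)) := hbound
    _ ≤ 4 * (Nat.factorial 3 / (κ * N) ^ 3) := by
        gcongr; exact exp_neg_le_factorial_div_pow (by positivity) 3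
    _ = _ := by field_simp

/-- Let `β > 0`, `A > 0` and `δ > 0`.  There is a constant `C`
depending only on `β`, `A` and `δ` such that for every `N ≥ 2`, `1 ≤ d ≤ N - 1`,
`λ_1, …, λ_N ∈ [-A, A]`, `z > A + 1`, `γ_1, …, γ_N` i.i.d. `Gamma(β/2, 1)`, and
`ρ_j = γ_j / Σ_ℓ γ_ℓ` (a Dirichlet vector with all parameters `β/2`):
`P( N (Σ_j ρ_j Y_j) / (Σ_j Y_j) ∉ (e^{-δ}, e^{δ}) ) ≤ C N⁻³`. -/
theorem dirichlet_weighted_Y_ratio_concentration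
    (β A δ : ℝ) (hβ : 0 < β) (hA : 0 < A) (hδ : 0 < δ) :
    ∃ C : ℝ,
      ∀ (N d : ℕ), 2 ≤ N → 1 ≤ d → d ≤ N - 1 →
      ∀ (lam : Fin N → ℝ), (∀ j, lam j ∈ Set.Icc (-A) A) →
      ∀ (z : ℝ), A + 1 < z →
      ∀ (Ω : Type) (_ : MeasurableSpace Ω) (P : Measure Ω), IsProbabilityMeasure P →
      ∀ (γ : Fin N → Ω → ℝ),
        (∀ j, Measurable (γ j)) →
        iIndepFun γ P →
        (∀ j, Measure.map (γ j) P = gammaMeasure (β / 2) 1) →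
        (P {ω | (N : ℝ) * (∑ j, (γ j ω / ∑ l, γ l ω) * Yquant N d lam z j) /
              (∑ j, Yquant N d lam z j) ∉
            Set.Ioo (Real.exp (-δ)) (Real.exp δ)}).toReal
          ≤ C * ((N : ℝ) ^ 3)⁻¹ :=
  dirichlet_weighted_Y_ratio_concentration_general β A δ hβ hδ
end
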